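/- Let p ∈ ℕ with p ≥ 1, set B_F = 2^p − 2^{−p}, and let x ∈ F_p be a fixed-point number with x > (ln 2)·(p + 1). Then round_p(exp(x)) = B_F and round_p(exp(−x)) = 0. -/
import Mathlib


/-- The set of fixed-point numbers of precision `p`:
`F_p = { s·a·2^{-p} : s ∈ {1,-1}, a ∈ ℕ, a ≤ 2^{2p} - 1 }`. -/
def Fp (p : ℕ) : Set ℝ :=
  {x | ∃ (s : ℝ) (a : ℕ), (s = 1 ∨ s = -1) ∧ a ≤ 2 ^ (2 * p) - 1 ∧
    x = s * a * (2 : ℝ) ^ (-(p : ℤ))}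

/-- The maximal fixed-point number `B_F = 2^p - 2^{-p}`. -/
noncomputable def BF (p : ℕ) : ℝ := 2 ^ p - (2 : ℝ) ^ (-(p : ℤ))

/-- `r` is the rounding of `x` to precision `p`: `r ∈ F_p` is closest to `x` among elements
of `F_p`, with ties broken in favor of the element of smaller absolute value. -/
def IsRound (p : ℕ) (x r : ℝ) : Prop :=
  r ∈ Fp p ∧ ∀ y ∈ Fp p, |x - r| < |x - y| ∨ (|x - r| = |x - y| ∧ |r| ≤ |y|)

lemma zpow_neg_p_pos (p : ℕ) : (0:ℝ) < (2:ℝ) ^ (-(p:ℤ)) := by positivity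

lemma two_pow_mul (p : ℕ) : ((2:ℝ) ^ (2 * p) : ℝ) * (2:ℝ) ^ (-(p:ℤ)) = 2 ^ p := by
  rw [← zpow_natCast (2:ℝ) (2*p), ← zpow_add₀ (by norm_num : (2:ℝ) ≠ 0)]
  rw [← zpow_natCast (2:ℝ) p]
  congr 1
  push_cast
  ring

lemma zero_mem_Fp (p : ℕ) : (0:ℝ) ∈ Fp p :=
  ⟨1, 0, Or.inl rfl, Nat.zero_le _, by simp⟩

lemma BF_mem_Fp (p : ℕ) : BF p ∈ Fp p := by
  refine ⟨1, 2 ^ (2*p) - 1, Or.inl rfl, le_refl _, ?_⟩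
  have h1 : (1:ℕ) ≤ 2 ^ (2*p) := Nat.one_le_two_pow
  rw [BF, Nat.cast_sub h1]
  push_cast
  rw [one_mul, sub_mul, two_pow_mul, one_mul]

lemma abs_le_BF_of_mem {p : ℕ} {y : ℝ} (hy : y ∈ Fp p) : |y| ≤ BF p := by
  obtain ⟨s, a, hs, ha, rfl⟩ := hy
  have hs1 : |s| = 1 := by rcases hs with rfl | rfl <;> simp
  have hap : (a:ℝ) ≤ (2:ℝ) ^ (2*p) - 1 := by
    have h1 : (1:ℕ) ≤ 2 ^ (2*p) := Nat.one_le_two_pow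
    have := (Nat.cast_le (α := ℝ)).mpr ha
    rwa [Nat.cast_sub h1, Nat.cast_pow, Nat.cast_ofNat, Nat.cast_one] at this
  have hpos := zpow_neg_p_pos p
  rw [abs_mul, abs_mul, hs1, one_mul, abs_of_nonneg (Nat.cast_nonneg a),
    abs_of_pos hpos, BF]
  calc (a:ℝ) * (2:ℝ) ^ (-(p:ℤ)) ≤ ((2:ℝ) ^ (2*p) - 1) * (2:ℝ) ^ (-(p:ℤ)) := by
        exact mul_le_mul_of_nonneg_right hap hpos.le
    _ = 2 ^ p - (2:ℝ) ^ (-(p:ℤ)) := by rw [sub_mul, two_pow_mul, one_mul]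

lemma abs_ge_of_ne_zero {p : ℕ} {y : ℝ} (hy : y ∈ Fp p) (h0 : y ≠ 0) :
    (2:ℝ) ^ (-(p:ℤ)) ≤ |y| := by
  obtain ⟨s, a, hs, ha, rfl⟩ := hy
  have hs1 : |s| = 1 := by rcases hs with rfl | rfl <;> simp
  have ha1 : (1:ℝ) ≤ (a:ℝ) := by
    have : a ≠ 0 := by rintro rfl; simp at h0
    exact_mod_cast Nat.one_le_iff_ne_zero.mpr this
  have hpos := zpow_neg_p_pos p
  rw [abs_mul, abs_mul, hs1, one_mul, abs_of_nonneg (Nat.cast_nonneg a), abs_of_pos hpos]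
  nlinarith

/-- For a fixed-point number `x ∈ F_p` with `x > (ln 2)(p + 1)`, the exponential `exp x`
rounds to `B_F` and `exp (-x)` rounds to `0`. -/
theorem round_exp_of_large (p : ℕ) (hp : 1 ≤ p) (x : ℝ) (hx : x ∈ Fp p)
    (hbig : Real.log 2 * ((p : ℝ) + 1) < x) :
    (∀ r : ℝ, IsRound p (Real.exp x) r → r = BF p) ∧
    (∀ r : ℝ, IsRound p (Real.exp (-x)) r → r = 0) := by
  have hpos := zpow_neg_p_pos p
  have hexp_big : (2:ℝ) ^ (p + 1) < Real.exp x := by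
    have h2 : Real.log ((2:ℝ) ^ (p+1)) = Real.log 2 * ((p:ℝ) + 1) := by
      rw [Real.log_pow]; push_cast; ring
    calc (2:ℝ) ^ (p+1) = Real.exp (Real.log ((2:ℝ)^(p+1))) := by
          rw [Real.exp_log (by positivity)]
      _ < Real.exp x := Real.exp_lt_exp.mpr (h2 ▸ hbig)
  have hBF_lt : BF p < Real.exp x := by
    have h1 : BF p < 2 ^ (p+1) := by
      rw [BF, pow_succ]
      nlinarith [one_le_pow₀ (by norm_num : (1:ℝ) ≤ 2) (n := p), hpos]
    linarith
  have hexp_small : Real.exp (-x) < (2:ℝ) ^ (-((p:ℤ) + 1)) := by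
    have h2 : Real.log ((2:ℝ) ^ (-((p:ℤ)+1))) = -(Real.log 2 * ((p:ℝ) + 1)) := by
      rw [Real.log_zpow]; push_cast; ring
    calc Real.exp (-x) < Real.exp (-(Real.log 2 * ((p:ℝ)+1))) :=
          Real.exp_lt_exp.mpr (by linarith)
      _ = (2:ℝ) ^ (-((p:ℤ)+1)) := by rw [← h2, Real.exp_log (by positivity)]
  constructor
  · intro r ⟨hrF, hmin⟩
    have hrle : r ≤ BF p := (abs_le.mp (abs_le_BF_of_mem hrF)).2
    rcases hmin (BF p) (BF_mem_Fp p) with h | h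
    · exfalso
      have h1 : |Real.exp x - r| = Real.exp x - r := abs_of_pos (by linarith)
      have h2 : |Real.exp x - BF p| = Real.exp x - BF p := abs_of_pos (by linarith)
      rw [h1, h2] at h; linarith
    · have h1 : |Real.exp x - r| = Real.exp x - r := abs_of_pos (by linarith)
      have h2 : |Real.exp x - BF p| = Real.exp x - BF p := abs_of_pos (by linarith)
      rw [h1, h2] at h; linarith [h.1]
  · intro r ⟨hrF, hmin⟩
    by_contra hr0
    have hr : (2:ℝ) ^ (-(p:ℤ)) ≤ |r| := abs_ge_of_ne_zero hrF hr0
    have hhalf : (2:ℝ) ^ (-((p:ℤ)+1)) * 2 = (2:ℝ) ^ (-(p:ℤ)) := by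
      rw [← zpow_add_one₀ (by norm_num : (2:ℝ) ≠ 0)]; ring_nf
    have hexp_pos := Real.exp_pos (-x)
    have hkey : Real.exp (-x) < |Real.exp (-x) - r| := by
      have : Real.exp (-x) < |r| - Real.exp (-x) := by nlinarith
      calc Real.exp (-x) < |r| - Real.exp (-x) := this
        _ ≤ |r| - |Real.exp (-x)| := by rw [abs_of_pos hexp_pos]
        _ ≤ |Real.exp (-x) - r| := by
            rw [abs_sub_comm]; exact abs_sub_abs_le_abs_sub r (Real.exp (-x))
    rcases hmin 0 (zero_mem_Fp p) with h | h
    · rw [sub_zero, abs_of_pos hexp_pos] at h; linarith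
    · rw [sub_zero, abs_of_pos hexp_pos] at h
      have := h.2
      simp only [abs_zero] at this
      exact hr0 (abs_eq_zero.mp (le_antisymm this (abs_nonneg r)))
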